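/- Assume k : ℝⁿ → H is continuous. Let T > 0 and let γ : [0,T] → ℝⁿ be continuous. For each t ∈ [0,T] let Γ_{γ,t} ∈ H denote the occupation kernel of γ restricted to [0,t], i.e., the element of H satisfying ⟪g, Γ_{γ,t}⟫ = ∫₀ᵗ (ι g)(γ s) ds for all g ∈ H. Then the map t ↦ Γ_{γ,t} is continuous from [0,T] to H (in the Hilbert space norm). -/

import Mathlib

open scoped RealInnerProductSpace
open MeasureTheory Set

theorem eq_intervalIntegral_of_forall_inner_eq {H : Type*} [NormedAddCommGroup H]
    [InnerProductSpace ℝ H] [CompleteSpace H] {f : ℝ → H} {a b : ℝ}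
    (hf : IntervalIntegrable f volume a b) {v : H}
    (hv : ∀ g : H, ⟪g, v⟫ = ∫ s in a..b, ⟪g, f s⟫) :
    v = ∫ s in a..b, f s :=
  ext_inner_left ℝ fun g => (hv g).trans ((innerSL ℝ g).intervalIntegral_comp_comm hf)

theorem ContinuousOn.continuousOn_primitive_Icc {E : Type*} [NormedAddCommGroup E]
    [NormedSpace ℝ E] {f : ℝ → E} {a b : ℝ} (hf : ContinuousOn f (Icc a b)) :
    ContinuousOn (fun t => ∫ s in a..t, f s) (Icc a b) :=
  (intervalIntegral.continuousOn_primitive (hf.integrableOn_Icc (μ := volume))).congr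
    fun _ ht => intervalIntegral.integral_of_le ht.1

theorem occupation_kernel_time_continuity_general
    {n : ℕ} {H : Type*} [NormedAddCommGroup H] [InnerProductSpace ℝ H]
    [CompleteSpace H]
    (ι : H →ₗ[ℝ] (EuclideanSpace ℝ (Fin n) → ℝ))
    (k : EuclideanSpace ℝ (Fin n) → H)
    (hrep : ∀ (g : H) (x : EuclideanSpace ℝ (Fin n)), ι g x = ⟪g, k x⟫)
    (hk : Continuous k)
    (T : ℝ)
    (γ : ℝ → EuclideanSpace ℝ (Fin n)) (hγ : ContinuousOn γ (Set.Icc 0 T))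
    (Γ : ℝ → H)
    (hΓ : ∀ t ∈ Set.Icc (0:ℝ) T, ∀ g : H, ⟪g, Γ t⟫ = ∫ s in (0:ℝ)..t, ι g (γ s)) :
    ContinuousOn Γ (Set.Icc 0 T) := by
  have hkγ : ContinuousOn (fun s => k (γ s)) (Icc 0 T) := hk.comp_continuousOn hγ
  refine hkγ.continuousOn_primitive_Icc.congr fun t ht => ?_
  have hint : IntervalIntegrable (fun s => k (γ s)) volume 0 t :=
    (hkγ.mono (Icc_subset_Icc_right ht.2)).intervalIntegrable_of_Icc ht.1
  refine eq_intervalIntegral_of_forall_inner_eq hint fun g => ?_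
  simp only [hΓ t ht g, hrep]

/-- Continuity of the occupation kernel in the time horizon: if `Γ t` is the
occupation kernel of `γ` restricted to `[0,t]`, then `t ↦ Γ t` is continuous
on `[0,T]` in the Hilbert space norm. -/
theorem occupation_kernel_time_continuity
    {n : ℕ} (hn : 1 ≤ n) {H : Type*} [NormedAddCommGroup H] [InnerProductSpace ℝ H]
    [CompleteSpace H]
    (ι : H →ₗ[ℝ] (EuclideanSpace ℝ (Fin n) → ℝ)) (hι : Function.Injective ι)
    (k : EuclideanSpace ℝ (Fin n) → H)
    (hrep : ∀ (g : H) (x : EuclideanSpace ℝ (Fin n)), ι g x = ⟪g, k x⟫)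
    (hk : Continuous k)
    (T : ℝ) (hT : 0 < T)
    (γ : ℝ → EuclideanSpace ℝ (Fin n)) (hγ : ContinuousOn γ (Set.Icc 0 T))
    (Γ : ℝ → H)
    (hΓ : ∀ t ∈ Set.Icc (0:ℝ) T, ∀ g : H, ⟪g, Γ t⟫ = ∫ s in (0:ℝ)..t, ι g (γ s)) :
    ContinuousOn Γ (Set.Icc 0 T) :=
  occupation_kernel_time_continuity_general ι k hrep hk T γ hγ Γ hΓ
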